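/- If R : V → ℝ is continuously differentiable, then for every A in the fixed-point subspace H_G one has ∇R^aug(A) = Π_G ∇R(A); that is, at equivariant points the gradient of the augmented risk is the orthogonal projection of the gradient of the nominal risk onto the fixed-point subspace. -/

import Mathlib

open MeasureTheory InnerProductSpace RealInnerProductSpace

noncomputable section

/-- The fixed-point subspace `H_G = {v : ρ(g) v = v for all g}` of an orthogonal
representation `ρ : G → O(V)`. -/
def fixedSubmodule {G V : Type*} [Group G] [NormedAddCommGroup V] [InnerProductSpace ℝ V]
    (ρ : G →* (V ≃ₗᵢ[ℝ] V)) : Submodule ℝ V where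
  carrier := {v | ∀ g : G, ρ g v = v}
  add_mem' := by
    intro a b ha hb g
    simp [map_add, ha g, hb g]
  zero_mem' := by
    intro g
    simp
  smul_mem' := by
    intro c a ha g
    rw [_root_.map_smul, ha g]

/-- The orthogonal projection onto a subspace `K`, as a map `V → V`. -/
def projSub {V : Type*} [NormedAddCommGroup V] [InnerProductSpace ℝ V] (K : Submodule ℝ V)
    [K.HasOrthogonalProjection] : V →L[ℝ] V :=
  K.subtypeL.comp K.orthogonalProjectionOnto

/-- The augmented risk `R^aug(A) = ∫_G R(ρ(g) A) dμ(g)`. -/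
def augRisk {G V : Type*} [Group G] [MeasurableSpace G]
    [NormedAddCommGroup V] [InnerProductSpace ℝ V]
    (μ : Measure G) (ρ : G →* (V ≃ₗᵢ[ℝ] V)) (R : V → ℝ) : V → ℝ :=
  fun A => ∫ g, R (ρ g A) ∂μ

/-- The Hessian of `f : V → ℝ` at `A`, regarded as a linear map `V → V`
(the derivative of the gradient field). -/
def hess {V : Type*} [NormedAddCommGroup V] [InnerProductSpace ℝ V] [CompleteSpace V]
    (f : V → ℝ) (A : V) : V →L[ℝ] V :=
  fderiv ℝ (gradient f) A

/-!
Differentiating under the integral sign gives `D R^aug(A) = ∫ DR(ρ(g) A) ∘ ρ(g) dμ`, which at a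
fixed point `A` is `DR(A) ∘ ∫ ρ(g) dμ`. Left invariance of Haar measure makes the averaging
operator `v ↦ ∫ ρ(g) v dμ` take values in `H_G`, and orthogonality of `ρ` makes `v - ∫ ρ(g) v dμ`
orthogonal to `H_G`; so the averaging operator is `Π_G`, and self-adjointness of `Π_G` moves it
onto the gradient.
-/

section OrthogonalRepresentation

variable {G V : Type*} [Group G] [NormedAddCommGroup V] [InnerProductSpace ℝ V]
  (ρ : G →* (V ≃ₗᵢ[ℝ] V))

theorem projSub_eq_starProjection (K : Submodule ℝ V) [K.HasOrthogonalProjection] :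
    projSub K = K.starProjection :=
  rfl

theorem integral_orbit_mem_fixedSubmodule [MeasurableSpace G] [MeasurableMul G] (μ : Measure G)
    [μ.IsMulLeftInvariant] (v : V) : ∫ g, ρ g v ∂μ ∈ fixedSubmodule ρ := fun h => calc
  ρ h (∫ g, ρ g v ∂μ) = ∫ g, ρ h (ρ g v) ∂μ :=
    ((ρ h).toContinuousLinearEquiv.integral_comp_comm _).symm
  _ = ∫ g, ρ (h * g) v ∂μ := by simp only [map_mul]; rfl
  _ = ∫ g, ρ g v ∂μ := integral_mul_left_eq_self (fun g => ρ g v) h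

theorem integral_orbit_eq_projSub [TopologicalSpace G] [CompactSpace G] [MeasurableSpace G]
    [BorelSpace G] [MeasurableMul G] [FiniteDimensional ℝ V] (μ : Measure G)
    [IsProbabilityMeasure μ] [μ.IsMulLeftInvariant] (hρ : ∀ v : V, Continuous fun g => ρ g v)
    (v : V) : ∫ g, ρ g v ∂μ = projSub (fixedSubmodule ρ) v := by
  refine (Submodule.eq_starProjection_of_mem_of_inner_eq_zero
    (integral_orbit_mem_fixedSubmodule ρ μ v) fun u hu => ?_).symm
  have hv_int : Integrable (fun g => ρ g v) μ :=
    (hρ v).integrable_of_hasCompactSupport (.of_compactSpace _)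
  have : ⟪∫ g, ρ g v ∂μ, u⟫ = ⟪v, u⟫ := calc
    ⟪∫ g, ρ g v ∂μ, u⟫ = ∫ g, ⟪ρ g v, ρ g u⟫ ∂μ := by
      rw [real_inner_comm, ← integral_inner hv_int]
      simp only [real_inner_comm, hu _]
    _ = ⟪v, u⟫ := by simp
  rw [inner_sub_left, this, sub_self]

theorem continuous_orbit [TopologicalSpace G] (hρ : Continuous fun p : G × V => ρ p.1 p.2)
    (v : V) : Continuous fun g => ρ g v :=
  hρ.comp (continuous_id.prodMk continuous_const)

theorem exists_bound_comp_orbit [TopologicalSpace G] [CompactSpace G]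
    (hρ : Continuous fun p : G × V => ρ p.1 p.2) {E : Type*} [NormedAddCommGroup E] {f : V → E}
    (hf : Continuous f) {s : Set V} (hs : IsCompact s) : ∃ C, ∀ g, ∀ x ∈ s, ‖f (ρ g x)‖ ≤ C := by
  obtain ⟨C, hC⟩ := ((isCompact_univ.prod hs).image hρ).exists_bound_of_continuousOn
    hf.continuousOn
  exact ⟨C, fun g x hx => hC _ ⟨(g, x), ⟨trivial, hx⟩, rfl⟩⟩

theorem continuous_rep_toContinuousLinearMap [TopologicalSpace G] [FiniteDimensional ℝ V]
    (hρ : ∀ v : V, Continuous fun g => ρ g v) :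
    Continuous fun g => ((ρ g).toContinuousLinearEquiv : V →L[ℝ] V) :=
  continuous_clm_apply.mpr hρ

theorem hasFDerivAt_augRisk [TopologicalSpace G] [CompactSpace G] [MeasurableSpace G]
    [BorelSpace G] [FiniteDimensional ℝ V] (μ : Measure G) [IsFiniteMeasure μ]
    (hρ : Continuous fun p : G × V => ρ p.1 p.2) {R : V → ℝ} (hR : ContDiff ℝ 1 R) (A : V) :
    HasFDerivAt (augRisk μ ρ R)
      (∫ g, (fderiv ℝ R (ρ g A)).comp ((ρ g).toContinuousLinearEquiv : V →L[ℝ] V) ∂μ) A := by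
  have horbit := continuous_orbit ρ hρ
  obtain ⟨C, hC⟩ := exists_bound_comp_orbit ρ hρ (hR.continuous_fderiv one_ne_zero)
    (isCompact_closedBall A 1)
  refine hasFDerivAt_integral_of_dominated_of_fderiv_le (bound := fun _ => C)
    (F' := fun x g => (fderiv ℝ R (ρ g x)).comp ((ρ g).toContinuousLinearEquiv : V →L[ℝ] V))
    (Metric.ball_mem_nhds A one_pos)
    (.of_forall fun x => (hR.continuous.comp (horbit x)).aestronglyMeasurable)
    ((hR.continuous.comp (horbit A)).integrable_of_hasCompactSupport (.of_compactSpace _))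
    (((hR.continuous_fderiv one_ne_zero).comp (horbit A)).clm_comp
      (continuous_rep_toContinuousLinearMap ρ horbit)).aestronglyMeasurable
    (.of_forall fun g x hx => ?_) (integrable_const C) (.of_forall fun g x _ => ?_)
  · have hCx := hC g x (Metric.ball_subset_closedBall hx)
    calc _ ≤ ‖fderiv ℝ R (ρ g x)‖ * ‖((ρ g).toContinuousLinearEquiv : V →L[ℝ] V)‖ :=
          ContinuousLinearMap.opNorm_comp_le _ _
      _ ≤ C * 1 := by
          gcongr
          · exact (norm_nonneg _).trans hCx
          · exact (ρ g).toLinearIsometry.norm_toContinuousLinearMap_le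
      _ = C := mul_one C
  · exact ((hR.differentiable one_ne_zero (ρ g x)).hasFDerivAt).comp x
      ((ρ g).toContinuousLinearEquiv : V →L[ℝ] V).hasFDerivAt

theorem hasFDerivAt_augRisk_of_mem_fixedSubmodule [TopologicalSpace G] [CompactSpace G]
    [MeasurableSpace G] [BorelSpace G] [MeasurableMul G] [FiniteDimensional ℝ V] (μ : Measure G)
    [IsProbabilityMeasure μ] [μ.IsMulLeftInvariant] (hρ : Continuous fun p : G × V => ρ p.1 p.2)
    {R : V → ℝ} (hR : ContDiff ℝ 1 R) {A : V} (hA : A ∈ fixedSubmodule ρ) :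
    HasFDerivAt (augRisk μ ρ R) ((fderiv ℝ R A).comp (projSub (fixedSubmodule ρ))) A := by
  have horbit := continuous_orbit ρ hρ
  have hint : Integrable (fun g => (fderiv ℝ R A).comp
      ((ρ g).toContinuousLinearEquiv : V →L[ℝ] V)) μ :=
    (continuous_const.clm_comp (continuous_rep_toContinuousLinearMap ρ horbit))
      |>.integrable_of_hasCompactSupport (.of_compactSpace _)
  convert hasFDerivAt_augRisk ρ μ hρ hR A using 1
  ext v
  simp only [hA _]
  rw [ContinuousLinearMap.integral_apply hint, ContinuousLinearMap.comp_apply,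
    ← integral_orbit_eq_projSub ρ μ horbit, ← (fderiv ℝ R A).integral_comp_comm
      ((horbit v).integrable_of_hasCompactSupport (.of_compactSpace _))]
  rfl

end OrthogonalRepresentation

/-- If `R` is continuously differentiable then at every point `A` of the
fixed-point subspace `H_G` one has `∇R^aug(A) = Π_G ∇R(A)`. -/
theorem gradient_augRisk_eq_proj_gradient_on_fixed
    {G V : Type*} [Group G] [TopologicalSpace G] [IsTopologicalGroup G] [CompactSpace G]
    [MeasurableSpace G] [BorelSpace G]
    [NormedAddCommGroup V] [InnerProductSpace ℝ V] [FiniteDimensional ℝ V]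
    (μ : Measure G) [μ.IsHaarMeasure] [IsProbabilityMeasure μ]
    (ρ : G →* (V ≃ₗᵢ[ℝ] V)) (hρ : Continuous fun p : G × V => ρ p.1 p.2)
    (R : V → ℝ) (hR : ContDiff ℝ 1 R)
    (A : V) (hA : A ∈ fixedSubmodule ρ) :
    gradient (augRisk μ ρ R) A = projSub (fixedSubmodule ρ) (gradient R A) := by
  refine ext_inner_right ℝ fun v => ?_
  rw [gradient, (hasFDerivAt_augRisk_of_mem_fixedSubmodule ρ μ hρ hR hA).fderiv,
    toDual_symm_apply, ContinuousLinearMap.comp_apply, projSub_eq_starProjection,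
    Submodule.inner_starProjection_left_eq_right, gradient, toDual_symm_apply]
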